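/- arXiv:2404.16610 — 2 statements merged into one kernel-verified Lean document; each statement's English description precedes it below -/
import Mathlib

section
/- Let n ≥ 1, let 𝒴 = {1, ..., K} with K ≥ 1, and let (X_i, Y_i), i = n+1, ..., 2n+1, be random variables with values in 𝒳 × 𝒴 whose joint distribution is exchangeable. Fix a measurable score function s : 𝒳 × 𝒴 → ℝ, define p(X_{2n+1}, y) = (Σ_{i=n+1}^{2n} 1{s(X_i, Y_i) ≤ s(X_{2n+1}, y)} + 1)/(n+1) for each y ∈ 𝒴, and fix α ∈ (0,1). Define the ordinal prediction interval C(X_{2n+1}) = {y_min, y_min + 1, ..., y_max}, where y_min = min{y ∈ 𝒴 : p(X_{2n+1}, y) > α} and y_max = max{y ∈ 𝒴 : p(X_{2n+1}, y) > α} (and C(X_{2n+1}) = ∅ when the set {y : p(X_{2n+1}, y) > α} is empty). Then P(Y_{2n+1} ∈ C(X_{2n+1})) ≥ 1 − α. -/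
/-!
The conformal p-value of the true label `Y_{2n+1}` is `R / (n + 1)`, where `R` is the rank of the
test score among all `n + 1` scores. If it exceeds `α`, the true label belongs to
`{y : p(X_{2n+1}, y) > α}` and hence to the interval spanned by that set, so miscoverage forces
`R ≤ α (n + 1)`. Exchangeability gives every index the same probability of having rank at most `k`,
while at most `k` indices can have rank at most `k` at once; hence `(n + 1) P(R ≤ k) ≤ k`.
-/

open MeasureTheory ProbabilityTheory
open scoped ENNReal

namespace Conformal

open Finset

section Rank

variable {ι α : Type*} [Fintype ι] [LinearOrder α]

/-- Ties and `j` itself are counted: this is the numerator of the conformal p-value. -/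
def rank (f : ι → α) (j : ι) : ℕ := #{i | f i ≤ f j}

lemma rank_comp_perm (f : ι → α) (σ : Equiv.Perm ι) (j : ι) :
    rank (f ∘ σ) j = rank f (σ j) :=
  card_bij' (fun i _ => σ i) (fun i _ => σ.symm i) (by simp) (by simp) (by simp) (by simp)

lemma rank_last_eq {n : ℕ} (f : Fin (n + 1) → α) :
    rank f (Fin.last n) = #{i : Fin n | f i.castSucc ≤ f (Fin.last n)} + 1 := by
  simp only [rank, card_filter, Fin.sum_univ_castSucc, le_refl, if_true]

/-- All indices of rank at most `k` score at most as much as the highest-scoring one among them. -/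
lemma card_rank_le_le (f : ι → α) (k : ℕ) : #{j | rank f j ≤ k} ≤ k := by
  obtain h | ⟨j₀, hj₀, hmax⟩ := (filter (fun j => rank f j ≤ k) univ).eq_empty_or_nonempty.imp_right
    fun h => exists_max_image _ f h
  · simp [h]
  · calc #{j | rank f j ≤ k} ≤ rank f j₀ := card_le_card fun j hj => by simpa using hmax j hj
      _ ≤ k := (mem_filter.mp hj₀).2

end Rank

lemma sum_measure_le_of_card_le {Ω ι : Type*} [MeasurableSpace Ω] [Fintype ι] (μ : Measure Ω)
    {E : ι → Set Ω} [∀ ω j, Decidable (ω ∈ E j)] (hE : ∀ j, MeasurableSet (E j)) {k : ℕ}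
    (hk : ∀ ω, #{j | ω ∈ E j} ≤ k) :
    ∑ j, μ (E j) ≤ k * μ Set.univ := by
  calc ∑ j, μ (E j) = ∫⁻ ω, ∑ j, (E j).indicator 1 ω ∂μ := by
        rw [lintegral_finsetSum _ fun j _ => measurable_one.indicator (hE j)]
        simp [lintegral_indicator (hE _)]
    _ ≤ ∫⁻ _, (k : ℝ≥0∞) ∂μ := lintegral_mono fun ω => by
        simpa [Set.indicator_apply, sum_boole] using hk ω
    _ = k * μ Set.univ := lintegral_const _

section Exchangeable

variable {Ω ι β : Type*} [MeasurableSpace Ω] [MeasurableSpace β] [Fintype ι]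

lemma measurable_rank {s : β → ℝ} (hs : Measurable s) (j : ι) :
    Measurable fun v : ι → β => rank (fun i => s (v i)) j := by
  classical
  simp only [rank, card_filter]
  refine Finset.measurable_sum _ fun i _ => Measurable.ite ?_ measurable_const measurable_const
  exact measurableSet_le (hs.comp (measurable_pi_apply i)) (hs.comp (measurable_pi_apply j))

variable (P : Measure Ω) {Z : ι → Ω → β} (hZ : ∀ i, Measurable (Z i))
  (hexch : ∀ σ : Equiv.Perm ι,
    Measure.map (fun ω i => Z (σ i) ω) P = Measure.map (fun ω i => Z i ω) P)
  {s : β → ℝ} (hs : Measurable s)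
include hZ hexch hs

lemma measure_rank_le_perm (σ : Equiv.Perm ι) (j : ι) (k : ℕ) :
    P {ω | rank (fun i => s (Z i ω)) (σ j) ≤ k} = P {ω | rank (fun i => s (Z i ω)) j ≤ k} := by
  have hpre : {ω | rank (fun i => s (Z i ω)) (σ j) ≤ k}
      = (fun ω i => Z (σ i) ω) ⁻¹' {v | rank (fun i => s (v i)) j ≤ k} := by
    ext ω
    simp only [Set.mem_ofPred_eq, Set.mem_preimage]
    rw [← Function.comp_def (fun i => s (Z i ω)) σ, rank_comp_perm]
  have hS : MeasurableSet {v : ι → β | rank (fun i => s (v i)) j ≤ k} :=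
    measurable_rank hs j (measurableSet_Iic (a := k))
  rw [hpre, ← Measure.map_apply (measurable_pi_lambda _ fun i => hZ (σ i)) hS, hexch σ,
    Measure.map_apply (measurable_pi_lambda _ hZ) hS]
  rfl

lemma card_mul_measure_rank_le_le [IsProbabilityMeasure P] (j : ι) (k : ℕ) :
    Fintype.card ι * P {ω | rank (fun i => s (Z i ω)) j ≤ k} ≤ k := by
  calc Fintype.card ι * P {ω | rank (fun i => s (Z i ω)) j ≤ k}
      = ∑ j', P {ω | rank (fun i => s (Z i ω)) j' ≤ k} := by
        rw [← Finset.card_univ, ← nsmul_eq_mul, ← Finset.sum_const]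
        refine Finset.sum_congr rfl fun j' _ => ?_
        classical
        have h := measure_rank_le_perm P hZ hexch hs (Equiv.swap j j') j k
        rw [Equiv.swap_apply_left] at h
        exact h.symm
    _ ≤ k * P Set.univ :=
        sum_measure_le_of_card_le P (E := fun j' => {ω | rank (fun i => s (Z i ω)) j' ≤ k})
          (fun j' => measurable_pi_lambda _ hZ (measurable_rank hs j' (measurableSet_Iic (a := k))))
          fun ω => card_rank_le_le _ k
    _ = k := by simp

lemma measure_rank_le_mul_card_le [IsProbabilityMeasure P] (j : ι) {α : ℝ} (hα : 0 ≤ α) :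
    P {ω | (rank (fun i => s (Z i ω)) j : ℝ) ≤ α * Fintype.card ι} ≤ ENNReal.ofReal α := by
  have hne : (Fintype.card ι : ℝ≥0∞) ≠ 0 := by
    simpa using (Fintype.card_pos_iff.mpr ⟨j⟩).ne'
  refine (ENNReal.mul_le_mul_iff_right hne (ENNReal.natCast_ne_top _)).mp ?_
  calc Fintype.card ι * P {ω | (rank (fun i => s (Z i ω)) j : ℝ) ≤ α * Fintype.card ι}
      ≤ Fintype.card ι * P {ω | rank (fun i => s (Z i ω)) j ≤ ⌊α * Fintype.card ι⌋₊} := by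
        gcongr
        exact Nat.le_floor
    _ ≤ ⌊α * Fintype.card ι⌋₊ := card_mul_measure_rank_le_le P hZ hexch hs j _
    _ = ENNReal.ofReal ⌊α * Fintype.card ι⌋₊ := (ENNReal.ofReal_natCast _).symm
    _ ≤ ENNReal.ofReal (α * Fintype.card ι) :=
        ENNReal.ofReal_le_ofReal (Nat.floor_le (by positivity))
    _ = Fintype.card ι * ENNReal.ofReal α := by
        rw [ENNReal.ofReal_mul hα, ENNReal.ofReal_natCast, mul_comm]

end Exchangeable

end Conformal

open Conformal in
theorem ordinal_prediction_interval_marginal_coverage_general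
    {Ω : Type*} [MeasurableSpace Ω] (P : Measure Ω) [IsProbabilityMeasure P]
    {𝒳 : Type*} [MeasurableSpace 𝒳]
    (n K : ℕ)
    (Z : Fin (n + 1) → Ω → 𝒳 × Fin K)
    (hmeas : ∀ i, Measurable (Z i))
    (hexch : ∀ σ : Equiv.Perm (Fin (n + 1)),
      Measure.map (fun ω i => Z (σ i) ω) P = Measure.map (fun ω i => Z i ω) P)
    (s : 𝒳 × Fin K → ℝ) (hs : Measurable s)
    (p : Ω → Fin K → ℝ)
    (hp : ∀ ω y, p ω y =
      (((Finset.univ.filter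
          (fun i : Fin n => s (Z i.castSucc ω) ≤ s ((Z (Fin.last n) ω).1, y))).card : ℝ) + 1)
        / (n + 1))
    (α : ℝ) (hα : α ∈ Set.Ioo (0 : ℝ) 1)
    (A : Ω → Finset (Fin K))
    (hA : ∀ ω, A ω = Finset.univ.filter (fun y => α < p ω y)) :
    ENNReal.ofReal (1 - α) ≤
      P {ω | ∃ h : (A ω).Nonempty,
        (Z (Fin.last n) ω).2 ∈ Finset.Icc ((A ω).min' h) ((A ω).max' h)} := by
  set R : Ω → ℕ := fun ω => rank (fun i => s (Z i ω)) (Fin.last n)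
  set B := {ω | (R ω : ℝ) ≤ α * Fintype.card (Fin (n + 1))}
  have hpR : ∀ ω, p ω (Z (Fin.last n) ω).2 = R ω / (n + 1) := fun ω => by
    simp [hp, R, rank_last_eq]
  have hcover : Bᶜ ⊆ {ω | ∃ h : (A ω).Nonempty,
      (Z (Fin.last n) ω).2 ∈ Finset.Icc ((A ω).min' h) ((A ω).max' h)} := fun ω hω => by
    have hy : (Z (Fin.last n) ω).2 ∈ A ω := by
      simp only [B, Set.mem_compl_iff, Set.mem_ofPred_eq, not_le, Fintype.card_fin] at hω
      rw [hA, Finset.mem_filter, hpR, lt_div_iff₀ (by positivity)]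
      exact ⟨Finset.mem_univ _, by push_cast at hω; exact hω⟩
    exact ⟨⟨_, hy⟩, Finset.mem_Icc.mpr ⟨Finset.min'_le _ _ hy, Finset.le_max' _ _ hy⟩⟩
  have hB : MeasurableSet B :=
    (measurable_rank hs (Fin.last n)).comp (measurable_pi_lambda _ hmeas)
      (MeasurableSet.of_discrete (s := {m : ℕ | (m : ℝ) ≤ α * Fintype.card (Fin (n + 1))}))
  calc ENNReal.ofReal (1 - α) = 1 - ENNReal.ofReal α := by
        rw [ENNReal.ofReal_sub _ hα.1.le, ENNReal.ofReal_one]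
    _ ≤ 1 - P B := tsub_le_tsub_left (measure_rank_le_mul_card_le P hmeas hexch hs _ hα.1.le) _
    _ = P Bᶜ := (prob_compl_eq_one_sub hB).symm
    _ ≤ _ := measure_mono hcover

/-- Theorem 1, Algorithm 1: marginal coverage of the ordinal prediction
interval. With `A(ω) = {y : p(X_{2n+1}, y) > α}`, the prediction interval is
`C(X_{2n+1}) = {y_min, ..., y_max}` with `y_min = min A(ω)`, `y_max = max A(ω)` (empty when
`A(ω)` is empty); then `P(Y_{2n+1} ∈ C(X_{2n+1})) ≥ 1 − α`. -/
theorem ordinal_prediction_interval_marginal_coverage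
    {Ω : Type*} [MeasurableSpace Ω] (P : Measure Ω) [IsProbabilityMeasure P]
    {𝒳 : Type*} [MeasurableSpace 𝒳]
    (n K : ℕ) (hn : 1 ≤ n) (hK : 1 ≤ K)
    (Z : Fin (n + 1) → Ω → 𝒳 × Fin K)
    (hmeas : ∀ i, Measurable (Z i))
    (hexch : ∀ σ : Equiv.Perm (Fin (n + 1)),
      Measure.map (fun ω i => Z (σ i) ω) P = Measure.map (fun ω i => Z i ω) P)
    (s : 𝒳 × Fin K → ℝ) (hs : Measurable s)
    (p : Ω → Fin K → ℝ)
    (hp : ∀ ω y, p ω y =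
      (((Finset.univ.filter
          (fun i : Fin n => s (Z i.castSucc ω) ≤ s ((Z (Fin.last n) ω).1, y))).card : ℝ) + 1)
        / (n + 1))
    (α : ℝ) (hα : α ∈ Set.Ioo (0 : ℝ) 1)
    (A : Ω → Finset (Fin K))
    (hA : ∀ ω, A ω = Finset.univ.filter (fun y => α < p ω y)) :
    ENNReal.ofReal (1 - α) ≤
      P {ω | ∃ h : (A ω).Nonempty,
        (Z (Fin.last n) ω).2 ∈ Finset.Icc ((A ω).min' h) ((A ω).max' h)} :=
  ordinal_prediction_interval_marginal_coverage_general P n K Z hmeas hexch s hs p hp α hα A hA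
end

section
/- Let n ≥ 1, let 𝒴 = {1, ..., K} with K ≥ 1, and let (X_i, Y_i), i = 1, ..., 2n+1, be random variables with values in 𝒳 × 𝒴 whose joint distribution is exchangeable. Fix a measurable score function s : 𝒳 × 𝒴 → ℝ. For y ∈ 𝒴 let I_y = {i ∈ {n+1,...,2n} : Y_i = y}, n_y = |I_y|, and define p(X_{2n+1}|y) = (Σ_{i ∈ I_y} 1{s(X_i, y) ≤ s(X_{2n+1}, y)} + 1)/(n_y + 1). Fix α ∈ (0,1) and set y_min = min{y ∈ 𝒴 : p(X_{2n+1}|y) > α}, y_max = max{y ∈ 𝒴 : p(X_{2n+1}|y) > α}, and define the prediction interval C(X_{2n+1}) = {y_min, y_min + 1, ..., y_max} (Algorithm 1 with conditional conformal p-values; C(X_{2n+1}) = ∅ when {y : p(X_{2n+1}|y) > α} is empty). Then for every y ∈ 𝒴 with P(Y_{2n+1} = y) > 0, P(Y_{2n+1} ∈ C(X_{2n+1}) | Y_{2n+1} = y) ≥ 1 − α. -/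
/-!
Let `T` consist of the calibration indices and the test index. In every realisation, among the
indices of `T` in class `y`, at most an `α`-fraction have score rank at most `α` times the class
size, since the highest-scored of them has rank at least their number. By exchangeability each
index of `T` is equally likely to be such a low-ranked class-`y` index, and equally likely to lie
in class `y`; averaging over `T`, the test point lies in class `y` with `p(X_{2n+1} | y) ≤ α` with
probability at most `α P(Y_{2n+1} = y)`. When `p(X_{2n+1} | y) > α`, the label `y` belongs to `A`
and hence to the interval `[min A, max A]`.
-/

open MeasureTheory ProbabilityTheory Finset
open scoped ENNReal

theorem card_filter_rank_le {ι β : Type*} [LinearOrder β] (S : Finset ι) (f : ι → β) {t : ℝ}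
    (ht : 0 ≤ t) : (#{i ∈ S | (#{j ∈ S | f j ≤ f i} : ℝ) ≤ t} : ℝ) ≤ t := by
  set L := {i ∈ S | (#{j ∈ S | f j ≤ f i} : ℝ) ≤ t}
  obtain hL | ⟨i, hiL, hmax⟩ := L.eq_empty_or_nonempty.imp id (L.exists_max_image f)
  · simp [hL, ht]
  · calc (#L : ℝ) ≤ #{j ∈ S | f j ≤ f i} := by
          exact_mod_cast card_le_card fun j hj => mem_filter.2 ⟨(mem_filter.1 hj).1, hmax j hj⟩
      _ ≤ t := (mem_filter.1 hiL).2

theorem card_filter_comp_perm {ι : Type*} {T : Finset ι} (σ : Equiv.Perm ι)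
    (hσ : ∀ j, σ j ∈ T ↔ j ∈ T) (Q : ι → Prop) [DecidablePred Q] :
    #{j ∈ T | Q (σ j)} = #{j ∈ T | Q j} :=
  card_equiv σ fun j => by simp [hσ]

theorem Equiv.swap_apply_mem_iff {ι : Type*} [DecidableEq ι] {T : Finset ι} {a b : ι}
    (ha : a ∈ T) (hb : b ∈ T) (j : ι) : Equiv.swap a b j ∈ T ↔ j ∈ T := by
  rw [Equiv.swap_apply_def]
  split_ifs <;> simp_all

theorem measurable_card_filter {α ι : Type*} [MeasurableSpace α] (T : Finset ι)
    (q : ι → α → Prop) [∀ j, DecidablePred (q j)] (hq : ∀ j, MeasurableSet {x | q j x}) :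
    Measurable fun x => (#{j ∈ T | q j x} : ℝ) := by
  simp_rw [card_filter]
  push_cast
  exact Finset.measurable_sum _ fun j _ => Measurable.ite (hq j) measurable_const measurable_const

section ClassConditional

variable {ι E : Type*} (C : E → Prop) [DecidablePred C] (g : E → ℝ)

def classCount (T : Finset ι) (v : ι → E) : ℕ := #{j ∈ T | C (v j)}

noncomputable def classRank (T : Finset ι) (v : ι → E) (i : ι) : ℕ :=
  #{j ∈ T | C (v j) ∧ g (v j) ≤ g (v i)}

/-- With `C = {Y = y}` and `g = s(·, y)` this is the paper's `p(X_i | y)` for the calibration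
indices `D`. -/
noncomputable def classPValue (D : Finset ι) (v : ι → E) (i : ι) : ℝ :=
  (classRank C g D v i + 1) / (classCount C D v + 1)

variable {C g}

theorem classCount_comp_perm {T : Finset ι} {σ : Equiv.Perm ι} (hσ : ∀ j, σ j ∈ T ↔ j ∈ T)
    (v : ι → E) : classCount C T (v ∘ σ) = classCount C T v :=
  card_filter_comp_perm σ hσ (fun k => C (v k))

theorem classRank_comp_perm {T : Finset ι} {σ : Equiv.Perm ι} (hσ : ∀ j, σ j ∈ T ↔ j ∈ T)
    (v : ι → E) (i : ι) : classRank C g T (v ∘ σ) i = classRank C g T v (σ i) :=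
  card_filter_comp_perm σ hσ (fun k => C (v k) ∧ g (v k) ≤ g (v (σ i)))

theorem card_filter_classRank_le (T : Finset ι) (v : ι → E) {t : ℝ} (ht : 0 ≤ t) :
    (#{i ∈ T | C (v i) ∧ (classRank C g T v i : ℝ) ≤ t} : ℝ) ≤ t := by
  convert card_filter_rank_le {j ∈ T | C (v j)} (g ∘ v) ht using 3
  simp only [filter_filter, classRank, Function.comp_apply]
  congr

theorem classPValue_le_iff [DecidableEq ι] {D : Finset ι} {N : ι} (hN : N ∉ D) {v : ι → E}
    (hC : C (v N)) (α : ℝ) :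
    classPValue C g D v N ≤ α ↔
      (classRank C g (insert N D) v N : ℝ) ≤ α * classCount C (insert N D) v := by
  have hrank : classRank C g (insert N D) v N = classRank C g D v N + 1 := by
    simp only [classRank, filter_insert, hC, le_refl, and_self, if_true]
    exact card_insert_of_notMem fun h => hN (mem_filter.1 h).1
  have hcount : classCount C (insert N D) v = classCount C D v + 1 := by
    simp only [classCount, filter_insert, hC, if_true]
    exact card_insert_of_notMem fun h => hN (mem_filter.1 h).1
  rw [classPValue, div_le_iff₀ (by positivity), hrank, hcount]
  push_cast
  rfl

theorem measurableSet_classRank_le [MeasurableSpace E] (hC : MeasurableSet {z | C z})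
    (hg : Measurable g) (T : Finset ι) (i : ι) (α : ℝ) :
    MeasurableSet {v : ι → E | C (v i) ∧ (classRank C g T v i : ℝ) ≤ α * classCount C T v} := by
  have hCj : ∀ j, MeasurableSet {v : ι → E | C (v j)} := fun j => measurable_pi_apply j hC
  refine (hCj i).inter (measurableSet_le (f := fun v => (classRank C g T v i : ℝ))
    (g := fun v => α * (classCount C T v : ℝ)) ?_ (measurable_const.mul ?_))
  · refine measurable_card_filter T _ fun j => (hCj j).inter ?_
    exact measurableSet_le (hg.comp (measurable_pi_apply j)) (hg.comp (measurable_pi_apply i))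
  · exact measurable_card_filter T _ hCj

end ClassConditional

section Exchangeable

variable {Ω ι E : Type*} [MeasurableSpace Ω] [MeasurableSpace E] {P : Measure Ω}
  {Z : ι → Ω → E}

theorem measure_preimage_comp_perm (hZ : ∀ i, Measurable (Z i))
    (hexch : ∀ σ : Equiv.Perm ι,
      Measure.map (fun ω i => Z (σ i) ω) P = Measure.map (fun ω i => Z i ω) P)
    (σ : Equiv.Perm ι) {S : Set (ι → E)} (hS : MeasurableSet S) :
    P ((fun ω j => Z (σ j) ω) ⁻¹' S) = P ((fun ω j => Z j ω) ⁻¹' S) := by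
  rw [← Measure.map_apply (measurable_pi_lambda _ fun j => hZ (σ j)) hS, hexch,
    Measure.map_apply (measurable_pi_lambda _ hZ) hS]

theorem measure_preimage_eq_of_exchangeable [DecidableEq ι] (hZ : ∀ i, Measurable (Z i))
    (hexch : ∀ σ : Equiv.Perm ι,
      Measure.map (fun ω i => Z (σ i) ω) P = Measure.map (fun ω i => Z i ω) P)
    {T : Finset ι} {G : ι → Set (ι → E)} (hG : ∀ i, MeasurableSet (G i))
    (hequiv : ∀ σ : Equiv.Perm ι, (∀ j, σ j ∈ T ↔ j ∈ T) → ∀ v i, v ∘ σ ∈ G i ↔ v ∈ G (σ i))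
    {i N : ι} (hi : i ∈ T) (hN : N ∈ T) :
    P ((fun ω j => Z j ω) ⁻¹' G i) = P ((fun ω j => Z j ω) ⁻¹' G N) := by
  have hswap := Equiv.swap_apply_mem_iff hi hN
  rw [← measure_preimage_comp_perm hZ hexch (Equiv.swap i N) (hG N)]
  congr 1
  ext ω
  have := hequiv _ hswap (fun j => Z j ω) N
  rw [Equiv.swap_apply_right] at this
  exact this.symm

theorem sum_measure_le_mul_sum_measure {ι : Type*} (μ : Measure Ω) (T : Finset ι)
    {p q : ι → Ω → Prop} [∀ ω, DecidablePred (p · ω)] [∀ ω, DecidablePred (q · ω)]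
    {c : ℝ≥0∞} (h : ∀ ω, (#{i ∈ T | p i ω} : ℝ≥0∞) ≤ c * #{i ∈ T | q i ω})
    (hp : ∀ i, MeasurableSet {ω | p i ω}) (hq : ∀ i, MeasurableSet {ω | q i ω}) :
    ∑ i ∈ T, μ {ω | p i ω} ≤ c * ∑ i ∈ T, μ {ω | q i ω} := by
  have hind : ∀ (r : ι → Ω → Prop) [∀ ω, DecidablePred (r · ω)] ω,
      ∑ i ∈ T, {ω | r i ω}.indicator 1 ω = (#{i ∈ T | r i ω} : ℝ≥0∞) := fun r _ ω => by
    simp only [Set.indicator_apply, Set.mem_ofPred_eq, Pi.one_apply, sum_boole]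
  have hsum : ∀ r : ι → Ω → Prop, (∀ i, MeasurableSet {ω | r i ω}) →
      ∑ i ∈ T, μ {ω | r i ω} = ∫⁻ ω, ∑ i ∈ T, {ω | r i ω}.indicator 1 ω ∂μ := fun r hr => by
    rw [lintegral_finsetSum _ fun i _ => measurable_one.indicator (hr i)]
    simp only [lintegral_indicator_one (hr _)]
  rw [hsum p hp, hsum q hq, ← lintegral_const_mul _
    (Finset.measurable_sum _ fun i _ => measurable_one.indicator (hq i))]
  exact lintegral_mono fun ω => by simpa only [hind] using h ω

variable [DecidableEq ι] {C : E → Prop} [DecidablePred C] {g : E → ℝ}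

theorem measure_classRank_le_le (hZ : ∀ i, Measurable (Z i))
    (hexch : ∀ σ : Equiv.Perm ι,
      Measure.map (fun ω i => Z (σ i) ω) P = Measure.map (fun ω i => Z i ω) P)
    (hC : MeasurableSet {z | C z}) (hg : Measurable g) {T : Finset ι} {N : ι} (hN : N ∈ T)
    {α : ℝ} (hα : 0 ≤ α) :
    P {ω | C (Z N ω) ∧
        (classRank C g T (fun j => Z j ω) N : ℝ) ≤ α * classCount C T (fun j => Z j ω)} ≤
      ENNReal.ofReal α * P {ω | C (Z N ω)} := by
  set bad : ι → Set (ι → E) :=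
    fun i => {v | C (v i) ∧ (classRank C g T v i : ℝ) ≤ α * classCount C T v}
  have hbad : ∀ i, MeasurableSet (bad i) := fun i => measurableSet_classRank_le hC hg T i α
  have hclass : ∀ i, MeasurableSet {v : ι → E | C (v i)} := fun i => measurable_pi_apply i hC
  have hbad_eq : ∀ i ∈ T, P {ω | C (Z i ω) ∧
      (classRank C g T (fun j => Z j ω) i : ℝ) ≤ α * classCount C T (fun j => Z j ω)} =
      P {ω | C (Z N ω) ∧
        (classRank C g T (fun j => Z j ω) N : ℝ) ≤ α * classCount C T (fun j => Z j ω)} :=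
    fun i hi => measure_preimage_eq_of_exchangeable hZ hexch hbad (fun σ hσ v i => by
      simp only [bad, Set.mem_ofPred_eq, classRank_comp_perm hσ, classCount_comp_perm hσ,
        Function.comp_apply]) hi hN
  have hclass_eq : ∀ i ∈ T, P {ω | C (Z i ω)} = P {ω | C (Z N ω)} := fun i hi =>
    measure_preimage_eq_of_exchangeable hZ hexch hclass (fun _ _ _ _ => Iff.rfl) hi hN
  have hcount : ∀ ω, (#{i ∈ T | C (Z i ω) ∧
      (classRank C g T (fun j => Z j ω) i : ℝ) ≤ α * classCount C T (fun j => Z j ω)} : ℝ≥0∞) ≤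
      ENNReal.ofReal α * #{i ∈ T | C (Z i ω)} := fun ω => by
    rw [← ENNReal.ofReal_natCast, ← ENNReal.ofReal_natCast, ← ENNReal.ofReal_mul hα]
    exact ENNReal.ofReal_le_ofReal
      (card_filter_classRank_le T (fun j => Z j ω) (mul_nonneg hα (Nat.cast_nonneg _)))
  have hsum := sum_measure_le_mul_sum_measure P T hcount
    (fun i => measurable_pi_lambda _ hZ (hbad i)) (fun i => measurable_pi_lambda _ hZ (hclass i))
  rw [sum_congr rfl hbad_eq, sum_congr rfl hclass_eq, sum_const, sum_const, nsmul_eq_mul,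
    nsmul_eq_mul, mul_left_comm] at hsum
  have hT : (#T : ℝ≥0∞) ≠ 0 := Nat.cast_ne_zero.2 (card_ne_zero.2 ⟨N, hN⟩)
  exact (ENNReal.mul_le_mul_iff_right hT (ENNReal.natCast_ne_top _)).1 hsum

theorem ofReal_one_sub_mul_measure_le_measure_lt_classPValue [IsFiniteMeasure P]
    (hZ : ∀ i, Measurable (Z i))
    (hexch : ∀ σ : Equiv.Perm ι,
      Measure.map (fun ω i => Z (σ i) ω) P = Measure.map (fun ω i => Z i ω) P)
    (hC : MeasurableSet {z | C z}) (hg : Measurable g) {D : Finset ι} {N : ι} (hN : N ∉ D)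
    {α : ℝ} (hα : 0 ≤ α) :
    ENNReal.ofReal (1 - α) * P {ω | C (Z N ω)} ≤
      P {ω | C (Z N ω) ∧ α < classPValue C g D (fun j => Z j ω) N} := by
  set B := {ω | C (Z N ω)}
  have hmiss : P {ω | C (Z N ω) ∧ classPValue C g D (fun j => Z j ω) N ≤ α} ≤
      ENNReal.ofReal α * P B := by
    convert measure_classRank_le_le (C := C) (g := g) hZ hexch hC hg (mem_insert_self N D) hα
      using 2
    ext ω
    exact and_congr_right (classPValue_le_iff (C := C) (g := g) hN · α)
  have hsplit : P B ≤ P {ω | C (Z N ω) ∧ α < classPValue C g D (fun j => Z j ω) N} +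
      ENNReal.ofReal α * P B := by
    refine (measure_mono fun ω hω => ?_).trans
      ((measure_union_le _ _).trans (add_le_add le_rfl hmiss))
    exact (le_or_gt _ α).symm.imp (⟨hω, ·⟩) (⟨hω, ·⟩)
  rw [ENNReal.ofReal_sub _ hα, ENNReal.ofReal_one, ENNReal.sub_mul fun _ _ => measure_ne_top P B,
    one_mul]
  exact tsub_le_iff_right.2 hsplit

end Exchangeable

theorem le_cond_apply_iff {Ω : Type*} [MeasurableSpace Ω] {μ : Measure Ω} {s : Set Ω}
    (hs : MeasurableSet s) (h0 : μ s ≠ 0) (hfin : μ s ≠ ∞) (t : Set Ω) (c : ℝ≥0∞) :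
    c ≤ μ[t|s] ↔ c * μ s ≤ μ (s ∩ t) := by
  rw [cond_apply hs, mul_comm, ← div_eq_mul_inv, ENNReal.le_div_iff_mul_le (.inl h0) (.inl hfin)]

theorem conditional_prediction_interval_conditional_coverage_general
    {Ω : Type*} [MeasurableSpace Ω] (P : Measure Ω) [IsProbabilityMeasure P]
    {𝒳 : Type*} [MeasurableSpace 𝒳]
    (n K : ℕ)
    (Z : Fin (2 * n + 1) → Ω → 𝒳 × Fin K)
    (hmeas : ∀ i, Measurable (Z i))
    (hexch : ∀ σ : Equiv.Perm (Fin (2 * n + 1)),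
      Measure.map (fun ω i => Z (σ i) ω) P = Measure.map (fun ω i => Z i ω) P)
    (s : 𝒳 × Fin K → ℝ) (hs : Measurable s)
    (Dcal : Finset (Fin (2 * n + 1)))
    (hDcal : Dcal = Finset.univ.filter
      (fun i : Fin (2 * n + 1) => n ≤ (i : ℕ) ∧ (i : ℕ) < 2 * n))
    (Iy : Fin K → Ω → Finset (Fin (2 * n + 1)))
    (hIy : ∀ y ω, Iy y ω = Dcal.filter (fun i => (Z i ω).2 = y))
    (p : Fin K → Ω → ℝ)
    (hp : ∀ y ω, p y ω =
      ((((Iy y ω).filter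
          (fun i => s ((Z i ω).1, y) ≤ s ((Z (Fin.last (2 * n)) ω).1, y))).card : ℝ) + 1)
        / (((Iy y ω).card : ℝ) + 1))
    (α : ℝ) (hα : α ∈ Set.Ioo (0 : ℝ) 1)
    (A : Ω → Finset (Fin K))
    (hA : ∀ ω, A ω = Finset.univ.filter (fun y => α < p y ω))
    (y : Fin K) (hpos : 0 < P {ω | (Z (Fin.last (2 * n)) ω).2 = y}) :
    ENNReal.ofReal (1 - α) ≤
      P[|{ω | (Z (Fin.last (2 * n)) ω).2 = y}]
        {ω | ∃ h : (A ω).Nonempty,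
          (Z (Fin.last (2 * n)) ω).2 ∈ Finset.Icc ((A ω).min' h) ((A ω).max' h)} := by
  set N := Fin.last (2 * n)
  have hN : N ∉ Dcal := by simp [hDcal, N]
  have hpv : ∀ ω, p y ω = classPValue (fun z => z.2 = y) (fun z => s (z.1, y)) Dcal
      (fun j => Z j ω) N := fun ω => by
    rw [hp, hIy, filter_filter]
    rfl
  have hcov := ofReal_one_sub_mul_measure_le_measure_lt_classPValue
    (C := fun z : 𝒳 × Fin K => z.2 = y) (g := fun z => s (z.1, y)) hmeas hexch
    (measurable_snd (measurableSet_singleton y)) (hs.comp (measurable_fst.prodMk measurable_const))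
    hN hα.1.le
  rw [le_cond_apply_iff (measurableSet_eq_fun (hmeas N).snd measurable_const) hpos.ne'
    (measure_ne_top _ _)]
  refine hcov.trans (measure_mono ?_)
  rintro ω ⟨hy, hlt⟩
  have hyA : y ∈ A ω := by simpa [hA, hpv] using hlt
  refine ⟨hy, ⟨y, hyA⟩, ?_⟩
  rw [hy]
  exact mem_Icc.2 ⟨min'_le _ _ hyA, le_max' _ _ hyA⟩

/-- Theorem 2, Algorithm 1: class-specific conditional coverage of the
ordinal prediction interval based on conditional conformal p-values. With
`A(ω) = {y : p(X_{2n+1}|y) > α}`, the prediction interval is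
`C(X_{2n+1}) = {y_min, ..., y_max}` with `y_min = min A(ω)`, `y_max = max A(ω)` (empty when
`A(ω)` is empty); then for every label `y` with `P(Y_{2n+1} = y) > 0`,
`P(Y_{2n+1} ∈ C(X_{2n+1}) | Y_{2n+1} = y) ≥ 1 − α`. -/
theorem conditional_prediction_interval_conditional_coverage
    {Ω : Type*} [MeasurableSpace Ω] (P : Measure Ω) [IsProbabilityMeasure P]
    {𝒳 : Type*} [MeasurableSpace 𝒳]
    (n K : ℕ) (hn : 1 ≤ n) (hK : 1 ≤ K)
    (Z : Fin (2 * n + 1) → Ω → 𝒳 × Fin K)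
    (hmeas : ∀ i, Measurable (Z i))
    (hexch : ∀ σ : Equiv.Perm (Fin (2 * n + 1)),
      Measure.map (fun ω i => Z (σ i) ω) P = Measure.map (fun ω i => Z i ω) P)
    (s : 𝒳 × Fin K → ℝ) (hs : Measurable s)
    (Dcal : Finset (Fin (2 * n + 1)))
    (hDcal : Dcal = Finset.univ.filter
      (fun i : Fin (2 * n + 1) => n ≤ (i : ℕ) ∧ (i : ℕ) < 2 * n))
    (Iy : Fin K → Ω → Finset (Fin (2 * n + 1)))
    (hIy : ∀ y ω, Iy y ω = Dcal.filter (fun i => (Z i ω).2 = y))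
    (p : Fin K → Ω → ℝ)
    (hp : ∀ y ω, p y ω =
      ((((Iy y ω).filter
          (fun i => s ((Z i ω).1, y) ≤ s ((Z (Fin.last (2 * n)) ω).1, y))).card : ℝ) + 1)
        / (((Iy y ω).card : ℝ) + 1))
    (α : ℝ) (hα : α ∈ Set.Ioo (0 : ℝ) 1)
    (A : Ω → Finset (Fin K))
    (hA : ∀ ω, A ω = Finset.univ.filter (fun y => α < p y ω))
    (y : Fin K) (hpos : 0 < P {ω | (Z (Fin.last (2 * n)) ω).2 = y}) :
    ENNReal.ofReal (1 - α) ≤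
      P[|{ω | (Z (Fin.last (2 * n)) ω).2 = y}]
        {ω | ∃ h : (A ω).Nonempty,
          (Z (Fin.last (2 * n)) ω).2 ∈ Finset.Icc ((A ω).min' h) ((A ω).max' h)} :=
  conditional_prediction_interval_conditional_coverage_general P n K Z hmeas hexch s hs Dcal hDcal
    Iy hIy p hp α hα A hA y hpos
end
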